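/- arXiv:1607.03139 — 2 statements merged into one kernel-verified Lean document; each statement's English description precedes it below -/
import Mathlib

section
/- Let A and B be structures in a first-order language L. The following are equivalent: (1) every primitive positive L-sentence that holds in A also holds in B; (2) there exist an index set I, an ultrafilter U on I, and a homomorphism from A into the ultrapower B^I/U of B. -/
open FirstOrder FirstOrder.Language

universe u v w

namespace Epic

variable {L : FirstOrder.Language.{u, v}}

/-- A finite conjunction of atomic formulas. -/
inductive IsConjAtomic {α : Type w} : ∀ {n : ℕ}, L.BoundedFormula α n → Prop
  | of_isAtomic {n : ℕ} {φ : L.BoundedFormula α n} : φ.IsAtomic → IsConjAtomic φ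
  | inf {n : ℕ} {φ ψ : L.BoundedFormula α n} :
      IsConjAtomic φ → IsConjAtomic ψ → IsConjAtomic (φ ⊓ ψ)

/-- A primitive positive formula: a block of existential quantifiers in front of a
finite conjunction of atomic formulas. -/
inductive IsPP {α : Type w} : ∀ {n : ℕ}, L.BoundedFormula α n → Prop
  | of_conj {n : ℕ} {φ : L.BoundedFormula α n} : IsConjAtomic φ → IsPP φ
  | ex {n : ℕ} {φ : L.BoundedFormula α (n + 1)} : IsPP φ → IsPP φ.ex

variable (L) in
/-- A class of `L`-structures with universes in `Type u`. -/
def StrClass := ∀ (M : Type u) [L.Structure M], Prop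

/-- The formula `φ(x₁,…,xₙ,y)` defines a (partial) function in the class `K`:
`K ⊨ ∀ x̄ y z, φ(x̄,y) ∧ φ(x̄,z) → y = z`. -/
def DefinesFn (K : StrClass L) {n : ℕ} (φ : L.Formula (Fin (n + 1))) : Prop :=
  ∀ (C : Type u) [L.Structure C], K C → ∀ (v : Fin n → C) (y z : C),
    φ.Realize (Fin.snoc v y) → φ.Realize (Fin.snoc v z) → y = z

/-- `A` is an epic substructure of `B` in the class `K`: any two homomorphisms from `B`
into a member of `K` agreeing on `A` are equal. -/
def IsEpicSubstructure (K : StrClass L) {B : Type u} [L.Structure B]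
    (A : L.Substructure B) : Prop :=
  ∀ (C : Type u) [L.Structure C], K C → ∀ g g' : B →[L] C,
    (∀ a ∈ A, g a = g' a) → g = g'

/-- `h` is a `K`-epimorphism: it is right-cancellable for homomorphisms into members of `K`. -/
def IsEpi (K : StrClass L) {A B : Type u} [L.Structure A] [L.Structure B]
    (h : A →[L] B) : Prop :=
  ∀ (C : Type u) [L.Structure C], K C → ∀ g g' : B →[L] C,
    g.comp h = g'.comp h → g = g'

/-! Homomorphisms preserve primitive positive formulas, and so does passing from an ultrapower
back to its factor (Łoś's theorem restricted to pp formulas). Conversely, a finite part of the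
positive diagram of `A` is the matrix of a pp sentence true in `A`, so it is realized in `B` by
some map `A → B`; gluing these maps along an ultrafilter on the finite parts of the diagram that
contains all the cones `{s | φ ∈ s}` gives a homomorphism into the ultrapower. -/

section

variable {α β : Type*}

theorem _root_.FirstOrder.Language.BoundedFormula.IsAtomic.restrictFreeVar [DecidableEq α]
    {n : ℕ} {φ : L.BoundedFormula α n} (h : φ.IsAtomic) (f : φ.freeVarFinset → β) :
    (φ.restrictFreeVar f).IsAtomic := by
  cases h with
  | equal => exact .equal _ _
  | rel => exact .rel _ _

theorem IsConjAtomic.relabel {m n : ℕ} {φ : L.BoundedFormula α m} (h : IsConjAtomic φ)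
    (f : α → β ⊕ Fin n) : IsConjAtomic (φ.relabel f) := by
  induction h with
  | of_isAtomic hφ => exact .of_isAtomic (hφ.relabel f)
  | inf _ _ ih₁ ih₂ => exact .inf ih₁ ih₂

theorem IsConjAtomic.restrictFreeVar [DecidableEq α] {n : ℕ} {φ : L.BoundedFormula α n}
    (h : IsConjAtomic φ) (f : φ.freeVarFinset → β) : IsConjAtomic (φ.restrictFreeVar f) := by
  induction h with
  | of_isAtomic hφ => exact .of_isAtomic (hφ.restrictFreeVar f)
  | inf _ _ ih₁ ih₂ => exact .inf (ih₁ _) (ih₂ _)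

theorem IsPP.exs : ∀ {n : ℕ} {φ : L.BoundedFormula α n}, IsPP φ → IsPP φ.exs
  | 0, _, h => h
  | _ + 1, _, h => h.ex.exs

theorem IsConjAtomic.isPP_exClosure [DecidableEq α] {φ : L.Formula α} (h : IsConjAtomic φ) :
    IsPP φ.exClosure :=
  IsPP.exs (.of_conj (((h.restrictFreeVar id).relabel _).relabel _))

end

section

variable {M N : Type*} [L.Structure M] [L.Structure N] (g : M →[L] N) {α : Type*} {n : ℕ}
  {φ : L.BoundedFormula α n} {v : α → M} {xs : Fin n → M}

include g in
theorem _root_.FirstOrder.Language.BoundedFormula.IsAtomic.realize_hom (h : φ.IsAtomic) :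
    φ.Realize v xs → φ.Realize (g ∘ v) (g ∘ xs) := by
  induction h with
  | equal t₁ t₂ =>
    simp only [BoundedFormula.realize_bdEqual, ← Sum.comp_elim, HomClass.realize_term]
    exact congrArg g
  | rel R ts =>
    simp only [BoundedFormula.realize_rel, ← Sum.comp_elim, HomClass.realize_term]
    exact g.map_rel R _

include g in
theorem IsConjAtomic.realize_hom (h : IsConjAtomic φ) :
    φ.Realize v xs → φ.Realize (g ∘ v) (g ∘ xs) := by
  induction h with
  | of_isAtomic hφ => exact hφ.realize_hom g
  | inf _ _ ih₁ ih₂ =>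
    simp only [BoundedFormula.realize_inf]
    exact And.imp ih₁ ih₂

include g in
theorem IsPP.realize_hom (h : IsPP φ) : φ.Realize v xs → φ.Realize (g ∘ v) (g ∘ xs) := by
  induction h with
  | of_conj hφ => exact hφ.realize_hom g
  | ex _ ih =>
    simp only [BoundedFormula.realize_ex]
    rintro ⟨a, ha⟩
    exact ⟨g a, by simpa only [Fin.comp_snoc] using ih ha⟩

include g in
theorem IsPP.realize_sentence_hom {φ : L.Sentence} (h : IsPP φ) : M ⊨ φ → N ⊨ φ := by
  have hv : (g ∘ default : Empty → N) = default := Subsingleton.elim _ _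
  have hxs : (g ∘ default : Fin 0 → N) = default := Subsingleton.elim _ _
  simpa only [Sentence.Realize, Formula.Realize, hv, hxs] using
    h.realize_hom g (v := default) (xs := default)

end

/-! Unlike Mathlib's `Ultraproduct.boundedFormula_realize_cast`, the transfer below needs no
nonempty factor: for pp formulas only existential witnesses have to be carried down. -/

section

variable {ι : Type*} {U : Ultrafilter ι} {M : ι → Type*} [∀ i, L.Structure (M i)] {β : Type*}
  {n : ℕ} {φ : L.BoundedFormula β n}

theorem _root_.FirstOrder.Language.BoundedFormula.IsAtomic.eventually_realize_of_realize_cast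
    (h : φ.IsAtomic) (x : β → ∀ i, M i) (v : Fin n → ∀ i, M i) :
    φ.Realize (fun b => (x b : (U : Filter ι).Product M))
        (fun k => (v k : (U : Filter ι).Product M)) →
      ∀ᶠ i in U, φ.Realize (x · i) (v · i) := by
  have hcast : (Sum.elim (fun b => (x b : (U : Filter ι).Product M))
      fun k => (v k : (U : Filter ι).Product M)) =
        fun a => ((Sum.elim x v a : ∀ i, M i) : (U : Filter ι).Product M) := by
    ext (a | a) <;> rfl
  have hcoord : ∀ i, Sum.elim (x · i) (v · i) = (Sum.elim x v · i) := by
    intro i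
    ext (a | a) <;> rfl
  induction h with
  | equal t₁ t₂ =>
    simp only [BoundedFormula.realize_bdEqual, hcast, hcoord, Ultraproduct.term_realize_cast]
    exact Quotient.exact'
  | rel R ts =>
    simp only [BoundedFormula.realize_rel, hcast, hcoord, Ultraproduct.term_realize_cast]
    exact (relMap_quotient_mk' (s := (U : Filter ι).productSetoid M) R _).1

theorem IsConjAtomic.eventually_realize_of_realize_cast (h : IsConjAtomic φ)
    (x : β → ∀ i, M i) (v : Fin n → ∀ i, M i) :
    φ.Realize (fun b => (x b : (U : Filter ι).Product M))
        (fun k => (v k : (U : Filter ι).Product M)) →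
      ∀ᶠ i in U, φ.Realize (x · i) (v · i) := by
  induction h with
  | of_isAtomic hφ => exact hφ.eventually_realize_of_realize_cast x v
  | inf _ _ ih₁ ih₂ =>
    simp only [BoundedFormula.realize_inf]
    exact fun hφψ => (ih₁ hφψ.1).and (ih₂ hφψ.2)

theorem IsPP.eventually_realize_of_realize_cast (h : IsPP φ) (x : β → ∀ i, M i)
    (v : Fin n → ∀ i, M i) :
    φ.Realize (fun b => (x b : (U : Filter ι).Product M))
        (fun k => (v k : (U : Filter ι).Product M)) →
      ∀ᶠ i in U, φ.Realize (x · i) (v · i) := by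
  induction h with
  | of_conj hφ => exact hφ.eventually_realize_of_realize_cast x v
  | @ex n φ _ ih =>
    simp only [BoundedFormula.realize_ex]
    rintro ⟨a, ha⟩
    induction a using Quotient.inductionOn' with | h a => ?_
    have hcast : Fin.snoc (fun k => (v k : (U : Filter ι).Product M))
        (a : (U : Filter ι).Product M) =
          fun k => ((Fin.snoc v a : Fin (n + 1) → ∀ i, M i) k : (U : Filter ι).Product M) := by
      ext k
      refine Fin.lastCases ?_ (fun k => ?_) k <;> simp
    have hcoord : ∀ i, Fin.snoc (v · i) (a i) = ((Fin.snoc v a : Fin (n + 1) → ∀ i, M i) · i) := by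
      intro i
      ext k
      refine Fin.lastCases ?_ (fun k => ?_) k <;> simp
    exact (ih _ (hcast ▸ ha)).mono fun i hi => ⟨a i, by rwa [hcoord]⟩

theorem IsPP.eventually_realize_sentence_of_realize {φ : L.Sentence} (h : IsPP φ) :
    (U : Filter ι).Product M ⊨ φ → ∀ᶠ i in U, M i ⊨ φ := by
  have hv : (default : Empty → (U : Filter ι).Product M) =
      fun b => ((b.elim : ∀ i, M i) : (U : Filter ι).Product M) := Subsingleton.elim _ _
  have hxs : (default : Fin 0 → (U : Filter ι).Product M) =
      fun k => ((k.elim0 : ∀ i, M i) : (U : Filter ι).Product M) := Subsingleton.elim _ _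
  simp only [Sentence.Realize, Formula.Realize, hv, hxs]
  intro hφ
  refine (h.eventually_realize_of_realize_cast _ _ hφ).mono fun i hi => ?_
  convert hi

end

section

variable {M N : Type*} [L.Structure M] [L.Structure N] {α : Type*}

theorem nonempty_fun_of_forall_isPP (h : ∀ φ : L.Sentence, IsPP φ → M ⊨ φ → N ⊨ φ) :
    Nonempty (M → N) := by
  rcases isEmpty_or_nonempty M with hM | ⟨⟨m⟩⟩
  · exact ⟨isEmptyElim⟩
  · let φ : L.Sentence := ((&0).bdEqual &0 : L.BoundedFormula Empty 1).ex
    have hφ : IsPP φ := .ex (.of_conj (.of_isAtomic (.equal _ _)))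
    obtain ⟨b, -⟩ := BoundedFormula.realize_ex.1 (h φ hφ (BoundedFormula.realize_ex.2 ⟨m, rfl⟩))
    exact ⟨fun _ => b⟩

theorem IsConjAtomic.exists_realize_of_forall_isPP [Nonempty (α → N)]
    (h : ∀ φ : L.Sentence, IsPP φ → M ⊨ φ → N ⊨ φ) {χ : L.Formula α} (hχ : IsConjAtomic χ)
    {v : α → M} (hv : χ.Realize v) : ∃ w : α → N, χ.Realize w := by
  classical
  have hM : M ⊨ χ.exClosure := (Formula.realize_exClosure χ).2
    ⟨fun a => v a, (BoundedFormula.realize_restrictFreeVar (f := id) v fun _ => rfl).2 hv⟩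
  obtain ⟨w, hw⟩ := (Formula.realize_exClosure χ).1 (h _ hχ.isPP_exClosure hM)
  -- `exClosure` only binds the free variables of `χ`; the others may be sent anywhere.
  obtain ⟨w₀⟩ := ‹Nonempty (α → N)›
  refine ⟨fun a => if ha : a ∈ χ.freeVarFinset then w ⟨a, ha⟩ else w₀ a, ?_⟩
  exact (BoundedFormula.realize_restrictFreeVar _ fun a => by simp).1 hw

theorem IsConjAtomic.exists_realize_forall_mem_of_forall_isPP [Nonempty (α → N)]
    (h : ∀ φ : L.Sentence, IsPP φ → M ⊨ φ → N ⊨ φ) (s : Finset (L.Formula α))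
    (hs : ∀ φ ∈ s, IsConjAtomic φ) {χ : L.Formula α} (hχ : IsConjAtomic χ) {v : α → M}
    (hχv : χ.Realize v) (hv : ∀ φ ∈ s, φ.Realize v) :
    ∃ w : α → N, χ.Realize w ∧ ∀ φ ∈ s, φ.Realize w := by
  classical
  induction s using Finset.induction_on generalizing χ with
  | empty => simpa using hχ.exists_realize_of_forall_isPP h hχv
  | insert φ s _ ih =>
    simp only [Finset.mem_insert, forall_eq_or_imp] at hs hv ⊢
    obtain ⟨w, hχφw, hsw⟩ := ih hs.2 (hχ.inf hs.1) (Formula.realize_inf.2 ⟨hχv, hv.1⟩) hv.2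
    exact ⟨w, (Formula.realize_inf.1 hχφw).1, (Formula.realize_inf.1 hχφw).2, hsw⟩

theorem exists_realize_forall_mem_of_forall_isPP [Nonempty (α → N)]
    (h : ∀ φ : L.Sentence, IsPP φ → M ⊨ φ → N ⊨ φ) (s : Finset (L.Formula α))
    (hs : ∀ φ ∈ s, IsConjAtomic φ) {v : α → M} (hv : ∀ φ ∈ s, φ.Realize v) :
    ∃ w : α → N, ∀ φ ∈ s, φ.Realize w := by
  rcases s.eq_empty_or_nonempty with rfl | ⟨φ, hφ⟩
  · exact ⟨Classical.arbitrary _, by simp⟩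
  obtain ⟨w, -, hw⟩ := (hs φ hφ).exists_realize_forall_mem_of_forall_isPP h s hs (hv φ hφ) hv
  exact ⟨w, hw⟩

end

-- Formulas with free variables in `M`, read at the identity assignment, stand for the sentences
-- with a constant for each element of `M` that make up the usual diagram.
variable (L) in
def positiveDiagram (M : Type*) [L.Structure M] : Set (L.Formula M) :=
  {φ | φ.IsAtomic ∧ φ.Realize id}

def Ultraproduct.homOfEventuallyRealize {M : Type*} [L.Structure M] {ι : Type*}
    (U : Ultrafilter ι) {N : ι → Type*} [∀ i, L.Structure (N i)] (F : ∀ i, M → N i)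
    (hF : ∀ φ ∈ positiveDiagram L M, ∀ᶠ i in U, φ.Realize (F i)) :
    M →[L] (U : Filter ι).Product N where
  toFun a := ((fun i => F i a : ∀ i, N i) : (U : Filter ι).Product N)
  map_fun' {n} f x := by
    have hφ : (Term.func f (fun k => Term.var (x k))).equal (Term.var (Structure.funMap f x)) ∈
        positiveDiagram L M :=
      ⟨.equal _ _, by simp [Formula.realize_equal]⟩
    refine ((Ultraproduct.funMap_cast f fun k i => F i (x k)).trans (Quotient.sound ?_)).symm
    exact (hF _ hφ).mono fun i hi => by simpa [Formula.realize_equal] using hi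
  map_rel' {n} r x hx := by
    have hφ : r.formula (fun k => Term.var (x k)) ∈ positiveDiagram L M :=
      ⟨.rel _ _, by simpa [Formula.realize_rel] using hx⟩
    refine (relMap_quotient_mk' (s := (U : Filter ι).productSetoid N) r
      fun k i => F i (x k)).2 ?_
    exact (hF _ hφ).mono fun i hi => by simpa [Formula.realize_rel] using hi

theorem exists_ultrafilter_finset_eventually_mem (D : Type*) :
    ∃ U : Ultrafilter (Finset D), ∀ d, ∀ᶠ s in (U : Filter (Finset D)), d ∈ s :=
  ⟨.of Filter.atTop, fun d => Ultrafilter.of_le _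
    ((Filter.eventually_ge_atTop {d}).mono fun _ => Finset.singleton_subset_iff.1)⟩

theorem exists_hom_ultrapower_of_forall_finset_realize {M : Type w} {N : Type*}
    [L.Structure M] [L.Structure N]
    (h : ∀ s : Finset (L.Formula M), ↑s ⊆ positiveDiagram L M →
      ∃ F : M → N, ∀ φ ∈ s, φ.Realize F) :
    ∃ (ι : Type (max u v w)) (U : Ultrafilter ι),
      Nonempty (M →[L] (U : Filter ι).Product fun _ : ι => N) := by
  choose F hF using fun s : Finset (positiveDiagram L M) =>
    h (s.map (Function.Embedding.subtype _)) (by simp +contextual [Set.subset_def])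
  obtain ⟨U, hU⟩ := exists_ultrafilter_finset_eventually_mem (positiveDiagram L M)
  exact ⟨_, U, ⟨Ultraproduct.homOfEventuallyRealize U F fun φ hφ =>
    (hU ⟨φ, hφ⟩).mono fun s hs => hF s φ (Finset.mem_map_of_mem _ hs)⟩⟩

/-- Lemma 4; Hodges, Thm. 6.5.7.  Every primitive positive sentence true
in `A` is true in `B` iff there is a homomorphism from `A` into some ultrapower of `B`. -/
theorem pp_sentences_preserved_iff_hom_into_ultrapower {L : FirstOrder.Language.{u, u}}
    (A B : Type u) [L.Structure A] [L.Structure B] :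
    (∀ φ : L.Sentence, IsPP φ → A ⊨ φ → B ⊨ φ) ↔
      ∃ (ι : Type u) (U : Ultrafilter ι),
        Nonempty (A →[L] (U : Filter ι).Product fun _ : ι => B) := by
  constructor
  · intro h
    have := nonempty_fun_of_forall_isPP h
    exact exists_hom_ultrapower_of_forall_finset_realize fun s hs =>
      exists_realize_forall_mem_of_forall_isPP h s (fun φ hφ => .of_isAtomic (hs hφ).1)
        fun φ hφ => (hs hφ).2
  · rintro ⟨ι, U, ⟨g⟩⟩ φ hφ hA
    exact Filter.eventually_const.1
      (hφ.eventually_realize_sentence_of_realize (hφ.realize_sentence_hom g hA))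

end Epic
end

section
/- Let K be any class of L-structures and let A be a substructure of B with A, B ∈ K. Suppose that for every b₁ ∈ B there exist a finite conjunction of atomic formulas α(x₁,…,xₙ,y₁,…,y_m) with m ≥ 1, elements a₁,…,aₙ ∈ A, and elements b₂,…,b_m ∈ B such that α defines an m-tuple-valued function in K (i.e., K ⊨ ∀x̄∀ȳ∀z̄ (α(x̄,ȳ) ∧ α(x̄,z̄) → ȳ = z̄)) and B ⊨ α(ā, b̄) where b̄ = (b₁,…,b_m). Then A is an epic substructure of B in K. -/
open FirstOrder FirstOrder.Language

universe u v w

namespace Epic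

variable {L : FirstOrder.Language.{u, v}}

/-- The formula `α(x₁,…,xₙ,y₁,…,yₘ)` defines an `m`-tuple-valued function in `K`:
`K ⊨ ∀ x̄ ȳ z̄, α(x̄,ȳ) ∧ α(x̄,z̄) → ȳ = z̄`. -/
def DefinesTupleFn (K : StrClass L) {n m : ℕ} (α : L.Formula (Fin n ⊕ Fin m)) : Prop :=
  ∀ (C : Type u) [L.Structure C], K C → ∀ (v : Fin n → C) (y z : Fin m → C),
    α.Realize (Sum.elim v y) → α.Realize (Sum.elim v z) → y = z

lemma IsConjAtomic.realize_hom_s8 {B C : Type u} [L.Structure B] [L.Structure C]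
    (g : B →[L] C) {α : Type w} {n : ℕ} {φ : L.BoundedFormula α n}
    (hφ : IsConjAtomic φ) {v : α → B} {xs : Fin n → B} (hr : φ.Realize v xs) :
    φ.Realize (g ∘ v) (g ∘ xs) := by
  induction hφ with
  | of_isAtomic hat =>
    induction hat with
    | equal t₁ t₂ =>
      simp only [BoundedFormula.realize_bdEqual] at hr ⊢
      have : Sum.elim (g ∘ v) (g ∘ xs) = g ∘ Sum.elim v xs := by
        funext i; cases i <;> rfl
      rw [this, HomClass.realize_term, HomClass.realize_term, hr]
    | rel R ts =>
      simp only [BoundedFormula.realize_rel] at hr ⊢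
      have : ∀ i, Term.realize (Sum.elim (g ∘ v) (g ∘ xs)) (ts i)
          = g (Term.realize (Sum.elim v xs) (ts i)) := by
        intro i
        have : Sum.elim (g ∘ v) (g ∘ xs) = g ∘ Sum.elim v xs := by
          funext i; cases i <;> rfl
        rw [this, HomClass.realize_term]
      simp only [this]
      exact g.map_rel R _ hr
  | inf _ _ ih₁ ih₂ =>
    rw [BoundedFormula.realize_inf] at hr ⊢
    exact ⟨ih₁ hr.1, ih₂ hr.2⟩

/-- Theorem 6, (2) ⇒ (1), valid for arbitrary classes.  If every
`b₁ ∈ B` is the first coordinate of a tuple `b̄` from `B` such that `B ⊨ α(ā, b̄)` for some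
finite conjunction of atomic formulas `α` defining a tuple-valued function in `K` and some
parameters `ā` from `A`, then `A` is an epic substructure of `B` in `K`. -/
theorem atomic_generated_implies_epic_substructure {L : FirstOrder.Language.{u, v}}
    (K : StrClass L) {B : Type u} [L.Structure B] (A : L.Substructure B)
    (hA : K A) (hB : K B)
    (h : ∀ b₁ : B, ∃ (n m : ℕ) (α : L.Formula (Fin n ⊕ Fin (m + 1)))
      (a : Fin n → A) (b : Fin (m + 1) → B),
        IsConjAtomic α ∧
        DefinesTupleFn K α ∧
        b 0 = b₁ ∧
        α.Realize (Sum.elim (fun i => (a i : B)) b)) :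
    IsEpicSubstructure K A := by
  intro C _ hC g g' hgg'
  ext b₁
  obtain ⟨n, m, α, a, b, hconj, hfn, hb0, hreal⟩ := h b₁
  have h1 : α.Realize (g ∘ Sum.elim (fun i => (a i : B)) b) := by
    have := hconj.realize_hom_s8 g hreal
    rwa [Subsingleton.elim ((g : B → C) ∘ (default : Fin 0 → B)) default] at this
  have h2 : α.Realize (g' ∘ Sum.elim (fun i => (a i : B)) b) := by
    have := hconj.realize_hom_s8 g' hreal
    rwa [Subsingleton.elim ((g' : B → C) ∘ (default : Fin 0 → B)) default] at this
  have hag : (g ∘ fun i => ((a i : B))) = (g' ∘ fun i => ((a i : B))) := by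
    funext i; exact hgg' _ (a i).2
  have he1 : (g ∘ Sum.elim (fun i => (a i : B)) b)
      = Sum.elim (g ∘ fun i => ((a i : B))) (g ∘ b) := by
    funext i; cases i <;> rfl
  have he2 : (g' ∘ Sum.elim (fun i => (a i : B)) b)
      = Sum.elim (g ∘ fun i => ((a i : B))) (g' ∘ b) := by
    rw [hag]; funext i; cases i <;> rfl
  rw [he1] at h1
  rw [he2] at h2
  have := hfn C hC _ _ _ h1 h2
  have := congrFun this 0
  simpa [hb0] using this

end Epic
end
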